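/- Let n ≥ 1, b ∈ (-1, -(n-2)/(n+2)], θ, γ, η ∈ ℝ. Define f on 𝔻 by z f'(z) = z/((1+ze^{i(η+γ)})(1+ze^{-i(η-γ)})), f(0)=0, and r by r(0)=0, r'(z) = f'(z)/(1 - e^{i(θ-2γ)} z^n). Assume Re(1 + z f''(z)/f'(z)) > 0 on 𝔻. Then ŵ(z) = e^{iθ} z^n [ ((n+(n+2)b)/(1+b) + zr''(z)/r'(z)) / (2/(1+b) + zr''(z)/r'(z)) ] satisfies |ŵ(z)| < 1 for all z ∈ 𝔻. -/

import Mathlib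

/-!
Write `Q = z r''/r'` and `u = e^{i(θ-2γ)} z^n`. Differentiating `r' = f'/(1 - u)` gives
`Q = z f''/f' + n u/(1 - u)`, hence
`n + 2 + 2Q = 2(1 + z f''/f') + n (1 + u)/(1 - u)`, whose real part is positive because
`(1 + u)/(1 - u)` maps the disc into the right half-plane. With `k = (n + (n+2)b)/(1+b)` and
`k' = 2/(1+b)` we have `k + k' = n + 2` and, from the bound on `b`, `k ≤ k'`. Then
`|k + Q|² - |k' + Q|² = (k - k')(k + k' + 2 Re Q) ≤ 0`, so the fraction in `ŵ` has modulus at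
most `1` and `|ŵ(z)| ≤ |z|ⁿ < 1`.
-/

open Metric Complex Filter Topology

lemma one_sub_ne_zero_of_norm_lt_one {R : Type*} [NormedRing R] [NormOneClass R] {u : R}
    (hu : ‖u‖ < 1) : 1 - u ≠ 0 :=
  sub_ne_zero.mpr fun h => by rw [← h, norm_one] at hu; exact lt_irrefl _ hu

lemma re_one_add_div_one_sub_pos {u : ℂ} (hu : ‖u‖ < 1) : 0 < ((1 + u) / (1 - u)).re := by
  have hnormSq : normSq u < 1 := by
    rw [← Complex.sq_norm]
    nlinarith [norm_nonneg u]
  have hne := one_sub_ne_zero_of_norm_lt_one hu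
  have hnum : (1 + u).re * (1 - u).re + (1 + u).im * (1 - u).im = 1 - normSq u := by
    simp only [add_re, sub_re, add_im, sub_im, one_re, one_im, normSq_apply]
    ring
  rw [div_re, ← add_div, hnum]
  exact div_pos (by linarith) (normSq_pos.mpr hne)

lemma norm_ofReal_add_le_norm_ofReal_add {k k' : ℝ} {Q : ℂ} (hk : k ≤ k')
    (hQ : 0 ≤ k + k' + 2 * Q.re) : ‖(k : ℂ) + Q‖ ≤ ‖(k' : ℂ) + Q‖ := by
  rw [← sq_le_sq₀ (norm_nonneg _) (norm_nonneg _), Complex.sq_norm, Complex.sq_norm,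
    normSq_apply, normSq_apply]
  simp only [add_re, add_im, ofReal_re, ofReal_im, zero_add]
  nlinarith [mul_nonneg (sub_nonneg.mpr hk) hQ]

lemma mul_deriv_div_eq_of_eventuallyEq_div_one_sub_pow {F R : ℂ → ℂ} {F' R' c z : ℂ} (n : ℕ)
    (hR : R =ᶠ[𝓝 z] fun w => F w / (1 - c * w ^ n)) (hF : HasDerivAt F F' z)
    (hR' : HasDerivAt R R' z) (hFz : F z ≠ 0) (hz : 1 - c * z ^ n ≠ 0) :
    z * R' / R z = z * F' / F z + n * (c * z ^ n) / (1 - c * z ^ n) := by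
  have hden : HasDerivAt (fun w => 1 - c * w ^ n) (-(c * (n * z ^ (n - 1)))) z := by
    simpa using ((hasDerivAt_pow n z).const_mul c).const_sub 1
  have hR'eq := hR'.unique ((hF.div hden hz).congr_of_eventuallyEq hR)
  have hpow : z * (n * z ^ (n - 1)) = n * z ^ n := by
    cases n with
    | zero => simp
    | succ m => rw [Nat.add_sub_cancel, pow_succ]; ring
  have hzR' :
      z * R' = (z * F' * (1 - c * z ^ n) + F z * c * (n * z ^ n)) / (1 - c * z ^ n) ^ 2 := by
    rw [hR'eq, ← hpow]
    ring
  rw [hzR', hR.self_of_nhds]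
  field_simp

lemma re_nat_add_two_add_two_mul_pos (n : ℕ) {A u : ℂ} (hA : 0 < (1 + A).re) (hu : ‖u‖ < 1) :
    0 < (n : ℝ) + 2 + 2 * (A + n * u / (1 - u)).re := by
  have hne := one_sub_ne_zero_of_norm_lt_one hu
  have hid : (n : ℂ) + 2 + 2 * (A + n * u / (1 - u)) = 2 * (1 + A) + n * ((1 + u) / (1 - u)) := by
    field_simp
    ring
  have hre := congrArg re hid
  rw [add_re]
  rw [add_re, one_re] at hA
  simp only [add_re, mul_re, one_re, natCast_re, natCast_im, re_ofNat, im_ofNat,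
    zero_mul, sub_zero] at hre
  nlinarith [mul_nonneg (Nat.cast_nonneg n : (0 : ℝ) ≤ n) (re_one_add_div_one_sub_pos hu).le]

lemma add_mul_div_one_add_le_div_one_add {x b : ℝ} (hx : 0 < x + 2) (hb : -1 < b)
    (hbx : b ≤ -((x - 2) / (x + 2))) : (x + (x + 2) * b) / (1 + b) ≤ 2 / (1 + b) := by
  have hb' : 0 < 1 + b := by linarith
  rw [← neg_div, le_div_iff₀ hx] at hbx
  gcongr
  linarith

lemma norm_exp_mul_pow_mul_div_lt_one (θ : ℝ) {n : ℕ} (hn : n ≠ 0) {z a b : ℂ} (hz : ‖z‖ < 1)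
    (hab : ‖a‖ ≤ ‖b‖) : ‖exp (θ * I) * z ^ n * (a / b)‖ < 1 := by
  rw [norm_mul, norm_mul, norm_exp_ofReal_mul_I, one_mul, norm_div, norm_pow]
  calc ‖z‖ ^ n * (‖a‖ / ‖b‖)
      ≤ ‖z‖ ^ n * 1 := by gcongr; exact div_le_one_of_le₀ hab (norm_nonneg _)
    _ < 1 := by rw [mul_one]; exact pow_lt_one₀ (norm_nonneg z) hz hn

open Metric Complex in
theorem stmt_17_general (n : ℕ) (hn : 1 ≤ n) (b : ℝ)
    (hb₁ : -1 < b) (hb₂ : b ≤ -(((n : ℝ) - 2) / ((n : ℝ) + 2))) (θ γ : ℝ)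
    (f' f'' r' r'' : ℂ → ℂ)
    (hf'' : ∀ z ∈ ball (0 : ℂ) 1, HasDerivAt f' (f'' z) z)
    (hf'ne : ∀ z ∈ ball (0 : ℂ) 1, f' z ≠ 0)
    (hr' : ∀ z ∈ ball (0 : ℂ) 1,
      r' z = f' z / (1 - Complex.exp ((θ - 2 * γ) * Complex.I) * z ^ n))
    (hr'' : ∀ z ∈ ball (0 : ℂ) 1, HasDerivAt r' (r'' z) z)
    (hre : ∀ z ∈ ball (0 : ℂ) 1, (1 + z * f'' z / f' z).re > 0) :
    ∀ z ∈ ball (0 : ℂ) 1,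
      ‖Complex.exp (θ * Complex.I) * z ^ n *
        (((((n : ℂ) + ((n : ℂ) + 2) * (b : ℂ)) / (1 + (b : ℂ))) + z * r'' z / r' z) /
          ((2 / (1 + (b : ℂ))) + z * r'' z / r' z))‖ < 1 := by
  intro z hz
  have hz1 : ‖z‖ < 1 := mem_ball_zero_iff.mp hz
  set u := exp ((θ - 2 * γ) * I) * z ^ n
  have hu : ‖u‖ < 1 := by
    rw [norm_mul, ← ofReal_ofNat, ← ofReal_mul, ← ofReal_sub, norm_exp_ofReal_mul_I, one_mul,
      norm_pow]
    exact pow_lt_one₀ (norm_nonneg z) hz1 (by omega)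
  have hQ : z * r'' z / r' z = z * f'' z / f' z + n * u / (1 - u) :=
    mul_deriv_div_eq_of_eventuallyEq_div_one_sub_pow n
      (eventually_of_mem (isOpen_ball.mem_nhds hz) hr') (hf'' z hz) (hr'' z hz) (hf'ne z hz)
      (one_sub_ne_zero_of_norm_lt_one hu)
  set k := ((n : ℝ) + ((n : ℝ) + 2) * b) / (1 + b)
  set k' := 2 / (1 + b)
  have hsum : k + k' = n + 2 := by
    have : 1 + b ≠ 0 := by linarith
    simp only [k, k']
    field_simp
    ring
  have hk : ((n : ℂ) + ((n : ℂ) + 2) * (b : ℂ)) / (1 + (b : ℂ)) = (k : ℂ) := by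
    push_cast [k]; rfl
  have hk' : 2 / (1 + (b : ℂ)) = (k' : ℂ) := by push_cast [k']; rfl
  rw [hk, hk']
  refine norm_exp_mul_pow_mul_div_lt_one θ (by omega) hz1
    (norm_ofReal_add_le_norm_ofReal_add
      (add_mul_div_one_add_le_div_one_add (by positivity) hb₁ hb₂) ?_)
  rw [hsum, hQ]
  exact (re_nat_add_two_add_two_mul_pos n (hre z hz) hu).le

open Metric Complex in
theorem stmt_17 (n : ℕ) (hn : 1 ≤ n) (b : ℝ)
    (hb₁ : -1 < b) (hb₂ : b ≤ -(((n : ℝ) - 2) / ((n : ℝ) + 2))) (θ γ η : ℝ)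
    (f f' f'' r' r'' : ℂ → ℂ)
    (hf0 : f 0 = 0)
    (hf' : ∀ z ∈ ball (0 : ℂ) 1, HasDerivAt f (f' z) z)
    (hf'eq : ∀ z ∈ ball (0 : ℂ) 1, z * f' z =
      z / ((1 + z * Complex.exp ((η + γ) * Complex.I)) *
        (1 + z * Complex.exp (-(η - γ) * Complex.I))))
    (hf'' : ∀ z ∈ ball (0 : ℂ) 1, HasDerivAt f' (f'' z) z)
    (hf'ne : ∀ z ∈ ball (0 : ℂ) 1, f' z ≠ 0)
    (hr' : ∀ z ∈ ball (0 : ℂ) 1,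
      r' z = f' z / (1 - Complex.exp ((θ - 2 * γ) * Complex.I) * z ^ n))
    (hr'' : ∀ z ∈ ball (0 : ℂ) 1, HasDerivAt r' (r'' z) z)
    (hre : ∀ z ∈ ball (0 : ℂ) 1, (1 + z * f'' z / f' z).re > 0) :
    ∀ z ∈ ball (0 : ℂ) 1,
      ‖Complex.exp (θ * Complex.I) * z ^ n *
        (((((n : ℂ) + ((n : ℂ) + 2) * (b : ℂ)) / (1 + (b : ℂ))) + z * r'' z / r' z) /
          ((2 / (1 + (b : ℂ))) + z * r'' z / r' z))‖ < 1 :=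
  stmt_17_general n hn b hb₁ hb₂ θ γ f' f'' r' r'' hf'' hf'ne hr' hr'' hre
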